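/- Let $g(t_1,t_2) = t_1 t_2 \log(\mu_1 + t_1)\log(\mu_2 + t_2)$ with constants $\mu_1,\mu_2 > 1$. Then $\sup_{(u,v)\in[0,1]^2} \left|\frac{g(Tu,Tv)}{g(T,T)} - uv\right| \to 0$ as $T \to \infty$, i.e., $g$ satisfies Assumption 3 with $g^*(u,v) = uv$. -/

import Mathlib

/-! Writing `f t = t * log (μ + t)`, the quotient `g (T u) (T v) / g T T` is the product of
`f (T u) / f T` and the analogous factor in `v`. Since `u (log (μ + T) - log (μ + T u)) ≤ 1`
on `[0, 1]`, each factor is within `1 / log (μ + T)` of `u`, uniformly in `u`, and the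
error tends to `0` because `log (μ + T) → ∞`. -/

open Set Real Filter Topology

section ScaledLogRatio

variable {μ T u : ℝ}

lemma mul_log_sub_log_le_one (hμ : 0 ≤ μ) (hT : 0 < T) (hu : u ∈ Icc (0 : ℝ) 1) :
    u * (log (μ + T) - log (μ + T * u)) ≤ 1 := by
  obtain ⟨hu0, hu1⟩ := hu
  rcases hu0.eq_or_lt with rfl | hu_pos
  · simp
  have hlog : log u + log (μ + T) ≤ log (μ + T * u) := by
    rw [← log_mul hu_pos.ne' (by positivity)]
    exact log_le_log (by positivity) (by nlinarith)
  calc u * (log (μ + T) - log (μ + T * u)) ≤ u * -log u := by gcongr; linarith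
    _ ≤ 1 - u := by linarith [self_sub_one_le_mul_log hu0]
    _ ≤ 1 := by linarith

lemma mul_mul_log_div_mul_left (hT : 0 < T) :
    T * u * log (μ + T * u) / (T * log (μ + T)) = u * log (μ + T * u) / log (μ + T) := by
  rw [mul_assoc, mul_div_mul_left _ _ hT.ne']

lemma abs_mul_log_div_sub_le (hμ : 1 < μ) (hT : 0 < T) (hu : u ∈ Icc (0 : ℝ) 1) :
    |T * u * log (μ + T * u) / (T * log (μ + T)) - u| ≤ (log (μ + T))⁻¹ := by
  have hL : 0 < log (μ + T) := log_pos (by linarith)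
  have hl : log (μ + T * u) ≤ log (μ + T) :=
    log_le_log (by nlinarith [hu.1]) (by nlinarith [hu.2])
  have h : u * log (μ + T * u) / log (μ + T) - u =
      -(u * (log (μ + T) - log (μ + T * u)) / log (μ + T)) := by
    field_simp; ring
  rw [mul_mul_log_div_mul_left hT, h, abs_neg, abs_of_nonneg (by have := hu.1; positivity),
    ← one_div]
  exact div_le_div_of_nonneg_right (mul_log_sub_log_le_one (by linarith) hT hu) hL.le

lemma abs_mul_log_div_le_one (hμ : 1 < μ) (hT : 0 < T) (hu : u ∈ Icc (0 : ℝ) 1) :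
    |T * u * log (μ + T * u) / (T * log (μ + T))| ≤ 1 := by
  have hL : 0 < log (μ + T) := log_pos (by linarith)
  have hl₀ : 0 ≤ log (μ + T * u) := log_nonneg (by nlinarith [hu.1])
  have hl : log (μ + T * u) ≤ log (μ + T) :=
    log_le_log (by nlinarith [hu.1]) (by nlinarith [hu.2])
  rw [mul_mul_log_div_mul_left hT, abs_of_nonneg (by have := hu.1; positivity), div_le_one hL]
  nlinarith [hu.1, hu.2]

lemma tendsto_inv_log_add_atTop (μ : ℝ) : Tendsto (fun T ↦ (log (μ + T))⁻¹) atTop (𝓝 0) :=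
  (tendsto_log_atTop.comp (tendsto_atTop_add_const_left _ μ tendsto_id)).inv_tendsto_atTop

end ScaledLogRatio

lemma abs_mul_sub_mul_le_add {a b a' b' δ δ' : ℝ} (ha : |a| ≤ 1) (hb' : |b'| ≤ 1)
    (hδ : |a' - a| ≤ δ) (hδ' : |b' - b| ≤ δ') : |a' * b' - a * b| ≤ δ + δ' :=
  calc |a' * b' - a * b| = |(a' - a) * b' + a * (b' - b)| := by ring_nf
    _ ≤ |a' - a| * |b'| + |a| * |b' - b| := by rw [← abs_mul, ← abs_mul]; exact abs_add_le _ _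
    _ ≤ δ * 1 + 1 * δ' := by gcongr; exact (abs_nonneg _).trans hδ
    _ = δ + δ' := by ring

theorem stmt_14 (μ₁ μ₂ : ℝ) (h₁ : 1 < μ₁) (h₂ : 1 < μ₂)
    (g : ℝ → ℝ → ℝ)
    (hg : ∀ t₁ t₂ : ℝ, g t₁ t₂ = t₁ * t₂ * Real.log (μ₁ + t₁) * Real.log (μ₂ + t₂)) :
    ∀ ε > 0, ∃ T₀ : ℝ, ∀ T ≥ T₀, ∀ u ∈ Icc (0:ℝ) 1, ∀ v ∈ Icc (0:ℝ) 1,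
      |g (T * u) (T * v) / g T T - u * v| < ε := by
  intro ε hε
  have hlim : Tendsto (fun T ↦ (log (μ₁ + T))⁻¹ + (log (μ₂ + T))⁻¹) atTop (𝓝 0) := by
    simpa using (tendsto_inv_log_add_atTop μ₁).add (tendsto_inv_log_add_atTop μ₂)
  obtain ⟨T₀, hT₀⟩ :=
    eventually_atTop.1 ((hlim.eventually (gt_mem_nhds hε)).and (eventually_gt_atTop 0))
  refine ⟨T₀, fun T hT u hu v hv ↦ ?_⟩
  obtain ⟨hsmall, hT_pos⟩ := hT₀ T hT
  have hsplit : g (T * u) (T * v) / g T T = T * u * log (μ₁ + T * u) / (T * log (μ₁ + T)) *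
      (T * v * log (μ₂ + T * v) / (T * log (μ₂ + T))) := by
    rw [hg, hg, div_mul_div_comm]; ring
  rw [hsplit]
  calc _ ≤ (log (μ₁ + T))⁻¹ + (log (μ₂ + T))⁻¹ :=
        abs_mul_sub_mul_le_add ((abs_of_nonneg hu.1).trans_le hu.2)
          (abs_mul_log_div_le_one h₂ hT_pos hv)
          (abs_mul_log_div_sub_le h₁ hT_pos hu) (abs_mul_log_div_sub_le h₂ hT_pos hv)
    _ < ε := hsmall
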